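/- In an admissible bisector system, any face of a Voronoi-like graph G in domain D that does not touch the boundary of D either coincides with or strictly contains the Voronoi region VR(s_f, S) of its site s_f. -/
import Mathlib


open Set Topology Metric

/-- The plane in which abstract Voronoi diagrams live. -/
abbrev Plane : Type := EuclideanSpace ℝ (Fin 2)

/-- An abstract bisector system: each pair of distinct sites `p, q` has a bisecting
curve `J p q` and open dominance regions `D p q` (label `p`) and `D q p` (label `q`)
which partition the plane. -/
structure BisectorSystem (S : Type) where
  J : S → S → Set Plane
  D : S → S → Set Plane
  J_symm : ∀ p q, J p q = J q p
  D_open : ∀ p q, IsOpen (D p q)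
  partition : ∀ p q, p ≠ q → D p q ∪ J p q ∪ D q p = Set.univ
  disjJD : ∀ p q, p ≠ q → Disjoint (D p q) (J p q)
  disjDD : ∀ p q, p ≠ q → Disjoint (D p q) (D q p)

namespace BisectorSystem

variable {S : Type} (B : BisectorSystem S)

/-- The (abstract) Voronoi region of `p` with respect to the set of sites `S'`. -/
def VR (p : S) (S' : Set S) : Set Plane := ⋂ q ∈ S' \ {p}, B.D p q

/-- The (abstract) Voronoi diagram of the set of sites `S'`. -/
def VDiag (S' : Set S) : Set Plane := (⋃ p ∈ S', B.VR p S')ᶜ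

/-- `J p s` splits `J p t` (also: `s` splits `t` with respect to `p`) if
`J(p,t) ∩ D(p,s)` has exactly two connected components. -/
def Splits (p s t : S) : Prop :=
  Nat.card (ConnectedComponents ↥(B.J p t ∩ B.D p s)) = 2

/-- Klein's axioms (A1)–(A4) for an admissible abstract bisector system. -/
structure Admissible : Prop where
  vr_nonempty : ∀ (S' : Set S) (p : S), p ∈ S' → (B.VR p S').Nonempty
  vr_connected : ∀ (S' : Set S) (p : S), p ∈ S' → IsPathConnected (B.VR p S')
  closures_cover : ∀ S' : Set S, S'.Nonempty →
      (⋃ p ∈ S', closure (B.VR p S')) = Set.univ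
  curve : ∀ p q : S, p ≠ q → Nonempty (ℝ ≃ₜ ↥(B.J p q))
  finite_inter : ∀ p q r t : S, B.J p q ≠ B.J r t → (B.J p q ∩ B.J r t).Finite

end BisectorSystem

/-- A Voronoi-like graph on the arrangement of an abstract bisector system inside a
domain `Dom`, represented through its faces.  Each face is an open connected subset of
`Dom`, the faces are pairwise disjoint and cover `Dom` up to a nowhere dense set, each
face `r` has a site `site r`, and every boundary point of a face interior to `Dom`
lies on a bisector `J(site r, q)` with the face locally on the `site r` side (the
label of `site r` is inside the face along all its bounding arcs; this is the face
structure of a graph all of whose internal vertices are locally Voronoi). -/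
structure VLFaces (S : Type) (B : BisectorSystem S) (Dom : Set Plane) where
  Faces : Set (Set Plane)
  site : Set Plane → S
  faces_open : ∀ r ∈ Faces, IsOpen r
  faces_conn : ∀ r ∈ Faces, IsConnected r
  faces_sub : ∀ r ∈ Faces, r ⊆ Dom
  faces_disj : ∀ r ∈ Faces, ∀ r' ∈ Faces, r ≠ r' → Disjoint r r'
  cover : interior Dom ⊆ closure (⋃ r ∈ Faces, r)
  boundary_label : ∀ r ∈ Faces, ∀ x ∈ frontier r ∩ interior Dom,
      ∃ q, q ≠ site r ∧ x ∈ B.J (site r) q ∧ x ∈ closure (r ∩ B.D (site r) q)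

/-- A face of the Voronoi diagram `V(S) ∩ Dom` of site `q`: a connected component of
`VR(q, S) ∩ interior Dom` (the full set of sites is used). -/
def VoronoiFace {S : Type} (B : BisectorSystem S) (Dom : Set Plane) (q : S)
    (f : Set Plane) : Prop :=
  ∃ x ∈ B.VR q Set.univ ∩ interior Dom,
    f = connectedComponentIn (B.VR q Set.univ ∩ interior Dom) x

/-- A Voronoi face `f` of site `q` is *missing* from the Voronoi-like graph `G` if it is
disjoint from every face of `G` of the same site `q` (equivalently, it is covered by
faces of `G` belonging to different sites). -/
def MissingFrom {S : Type} {B : BisectorSystem S} {Dom : Set Plane}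
    (G : VLFaces S B Dom) (q : S) (f : Set Plane) : Prop :=
  ∀ r ∈ G.Faces, G.site r = q → Disjoint f r

/-- in an admissible bisector system, any face `r` of a Voronoi-like graph
`G` in a domain `Dom` whose closure does not touch the boundary of `Dom` coincides with
or contains the Voronoi region of its site (truncated by the domain):
`VR(s_r, S) ∩ Dom ⊆ r`. -/
theorem vlfaces_interior_face_contains_region {S : Type} [Fintype S]
    (B : BisectorSystem S) (hB : B.Admissible)
    (Dom : Set Plane) (hDomOpen : IsOpen Dom) (hDomConn : IsConnected Dom)
    (hDomSC : SimplyConnectedSpace ↥Dom)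
    (G : VLFaces S B Dom) (r : Set Plane) (hr : r ∈ G.Faces)
    (hnotouch : closure r ∩ frontier Dom = ∅) :
    B.VR (G.site r) Set.univ ∩ Dom ⊆ r := by
  classical
  set s := G.site r with hs
  have hropen : IsOpen r := G.faces_open r hr
  have hrne : r.Nonempty := (G.faces_conn r hr).nonempty
  -- closure r ⊆ Dom
  have hclr : closure r ⊆ Dom := by
    intro x hx
    have h1 : x ∈ closure Dom := closure_mono (G.faces_sub r hr) hx
    by_contra hxD
    have hxf : x ∈ frontier Dom := ⟨h1, by simpa [hDomOpen.interior_eq] using hxD⟩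
    have : x ∈ closure r ∩ frontier Dom := ⟨hx, hxf⟩
    rw [hnotouch] at this
    exact this
  have hfr : frontier r ⊆ interior Dom := by
    intro x hx
    rw [hDomOpen.interior_eq]
    exact hclr hx.1
  have hlabel : ∀ x ∈ frontier r, ∃ q, q ≠ s ∧ x ∈ B.J s q ∧ x ∈ closure (r ∩ B.D s q) :=
    fun x hx => G.boundary_label r hr x ⟨hx, hfr hx⟩
  -- frontier r is disjoint from VR s T (for the bisector witnesses in T)
  have hfrV : ∀ x ∈ frontier r, x ∉ B.VR s Set.univ := by
    intro x hx hxV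
    obtain ⟨q, hqs, hxJ, -⟩ := hlabel x hx
    have hxD : x ∈ B.D s q := by
      have := Set.mem_iInter₂.1 hxV q
      exact this ⟨Set.mem_univ q, by simpa using hqs⟩
    exact Set.disjoint_left.1 (B.disjJD s q (Ne.symm hqs)) hxD hxJ
  -- a connected set avoiding frontier r and meeting r is contained in r
  have hclopen : ∀ W : Set Plane, IsPreconnected W → (∀ x ∈ frontier r, x ∉ W) →
      (W ∩ r).Nonempty → W ⊆ r := by
    intro W hW hWfr hWr
    have hdisj : Disjoint r (closure r)ᶜ := by
      rw [Set.disjoint_left]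
      intro a ha hac
      exact hac (subset_closure ha)
    have hunion : W ⊆ r ∪ (closure r)ᶜ := by
      intro x hxW
      by_cases hc : x ∈ closure r
      · by_cases hxr : x ∈ r
        · exact Or.inl hxr
        · exact absurd hxW (hWfr x ⟨hc, by rwa [hropen.interior_eq]⟩)
      · exact Or.inr hc
    exact hW.subset_left_of_subset_union hropen (isOpen_compl_iff.2 isClosed_closure)
      hdisj hunion hWr
  -- key induction: r meets VR s univ
  have key : ∀ n : ℕ, ∀ T : Set S, s ∈ T → (Set.univ \ T).ncard ≤ n →
      (r ∩ B.VR s T).Nonempty → (r ∩ B.VR s Set.univ).Nonempty := by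
    intro n
    induction n with
    | zero =>
      intro T hsT hcard hne
      have hT : Set.univ \ T = ∅ :=
        (Set.ncard_eq_zero (Set.toFinite _)).1 (Nat.le_zero.1 hcard)
      have hTuniv : T = Set.univ := by
        apply Set.eq_univ_of_forall
        intro q
        by_contra hq
        exact absurd (Set.mem_diff_of_mem (Set.mem_univ q) hq) (by simp [hT])
      rwa [hTuniv] at hne
    | succ n ih =>
      intro T hsT hcard hne
      by_cases hF : (frontier r ∩ B.VR s T).Nonempty
      · obtain ⟨y, hyfr, hyV⟩ := hF
        obtain ⟨q, hqs, hyJ, hyc⟩ := hlabel y hyfr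
        have hqT : q ∉ T := by
          intro hqT
          have hyD : y ∈ B.D s q :=
            Set.mem_iInter₂.1 hyV q ⟨hqT, by simpa using hqs⟩
          exact Set.disjoint_left.1 (B.disjJD s q (Ne.symm hqs)) hyD hyJ
        have hVopen : IsOpen (B.VR s T) :=
          (T \ {s}).toFinite.isOpen_biInter (fun q' _ => B.D_open s q')
        obtain ⟨z, hzV, hzr, hzD⟩ :
            (B.VR s T ∩ (r ∩ B.D s q)).Nonempty := by
          have := mem_closure_iff.1 hyc (B.VR s T) hVopen hyV
          obtain ⟨z, hz1, hz2⟩ := this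
          exact ⟨z, hz1, hz2⟩
        have hzV' : z ∈ B.VR s (insert q T) := by
          apply Set.mem_iInter₂.2
          intro q' hq'
          rcases hq'.1 with h | h
          · rwa [h]
          · exact Set.mem_iInter₂.1 hzV q' ⟨h, hq'.2⟩
        apply ih (insert q T) (Set.mem_insert_of_mem _ hsT) ?_ ⟨z, hzr, hzV'⟩
        have hlt : (Set.univ \ insert q T).ncard < (Set.univ \ T).ncard := by
          apply Set.ncard_lt_ncard _ (Set.toFinite _)
          constructor
          · exact Set.diff_subset_diff_right (Set.subset_insert q T)
          · intro hsub
            have : q ∈ Set.univ \ insert q T :=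
              hsub (Set.mem_diff_of_mem (Set.mem_univ q) hqT)
            exact this.2 (Set.mem_insert q T)
        omega
      · -- frontier r misses VR s T, so VR s T ⊆ r, hence VR s univ ⊆ r
        have hWfr : ∀ x ∈ frontier r, x ∉ B.VR s T := by
          intro x hx hxV
          exact hF ⟨x, hx, hxV⟩
        have hsub : B.VR s T ⊆ r := by
          apply hclopen _ ((hB.vr_connected T s hsT).isConnected).isPreconnected hWfr
          obtain ⟨z, hz1, hz2⟩ := hne
          exact ⟨z, hz2, hz1⟩
        obtain ⟨v, hv⟩ := hB.vr_nonempty Set.univ s (Set.mem_univ s)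
        have hvT : v ∈ B.VR s T := by
          apply Set.mem_iInter₂.2
          intro q' hq'
          exact Set.mem_iInter₂.1 hv q' ⟨Set.mem_univ q', hq'.2⟩
        exact ⟨v, hsub hvT, hv⟩
  -- start the induction at T = {s}
  have hVRr : (r ∩ B.VR s Set.univ).Nonempty := by
    apply key (Set.univ \ ({s} : Set S)).ncard {s} rfl le_rfl
    have hVs : B.VR s {s} = Set.univ := by
      simp [BisectorSystem.VR]
    rw [hVs]
    simpa using hrne
  -- conclude: VR s univ is connected, avoids frontier r, meets r
  have hfinal : B.VR s Set.univ ⊆ r := by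
    apply hclopen _ ((hB.vr_connected Set.univ s (Set.mem_univ s)).isConnected).isPreconnected
      hfrV
    obtain ⟨z, hz1, hz2⟩ := hVRr
    exact ⟨z, hz2, hz1⟩
  intro x hx
  exact hfinal hx.1
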